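/- arXiv:1201.4234 — 3 statements merged into one kernel-verified Lean document; each statement's English description precedes it below -/
import Mathlib

section
/- Let H be a complex Hilbert space, let A and B be continuous linear self-adjoint operators on H, and let ψ ∈ H with ‖ψ‖ = 1. Write ⟨A⟩ = re⟪ψ, Aψ⟫ and ⟨B⟩ = re⟪ψ, Bψ⟫. Then ‖Aψ − ⟨A⟩•ψ‖² · ‖Bψ − ⟨B⟩•ψ‖² ≥ (1/4)·|⟪ψ, (A∘B − B∘A)ψ⟫|², i.e. the product of the squared uncertainties of A and B in the state ψ is at least one quarter of the squared modulus of the expectation value of the commutator [A,B]. -/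
open scoped InnerProductSpace

/-- Generalized Heisenberg uncertainty principle (equation (92)). -/
theorem uncertainty_principle {H : Type*} [NormedAddCommGroup H] [InnerProductSpace ℂ H]
    [CompleteSpace H] (A B : H →L[ℂ] H)
    (hA : ∀ φ χ : H, ⟪A φ, χ⟫_ℂ = ⟪φ, A χ⟫_ℂ)
    (hB : ∀ φ χ : H, ⟪B φ, χ⟫_ℂ = ⟪φ, B χ⟫_ℂ)
    (ψ : H) (hψ : ‖ψ‖ = 1) :
    ‖A ψ - (((⟪ψ, A ψ⟫_ℂ).re : ℂ)) • ψ‖ ^ 2 * ‖B ψ - (((⟪ψ, B ψ⟫_ℂ).re : ℂ)) • ψ‖ ^ 2 ≥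
      (1 / 4) * ‖⟪ψ, (A ∘L B - B ∘L A) ψ⟫_ℂ‖ ^ 2 := by
  set a : H := A ψ - (((⟪ψ, A ψ⟫_ℂ).re : ℂ)) • ψ with ha
  set b : H := B ψ - (((⟪ψ, B ψ⟫_ℂ).re : ℂ)) • ψ with hb
  have key : ⟪ψ, (A ∘L B - B ∘L A) ψ⟫_ℂ = ⟪a, b⟫_ℂ - ⟪b, a⟫_ℂ := by
    simp only [ha, hb, ContinuousLinearMap.sub_apply, ContinuousLinearMap.comp_apply,
      inner_sub_left, inner_sub_right, inner_smul_left, inner_smul_right,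
      Complex.conj_ofReal]
    rw [← hA ψ (B ψ), ← hB ψ (A ψ), hA ψ ψ, hB ψ ψ]
    ring
  have hba : ⟪b, a⟫_ℂ = (starRingEnd ℂ) ⟪a, b⟫_ℂ := (inner_conj_symm b a).symm
  have him : ‖⟪ψ, (A ∘L B - B ∘L A) ψ⟫_ℂ‖ = 2 * |(⟪a, b⟫_ℂ).im| := by
    rw [key, hba, Complex.sub_conj]
    simp [Complex.norm_def, Complex.normSq_mk, abs_mul]
  have h1 : |(⟪a, b⟫_ℂ).im| ≤ ‖⟪a, b⟫_ℂ‖ := Complex.abs_im_le_norm _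
  have h2 : ‖⟪a, b⟫_ℂ‖ ≤ ‖a‖ * ‖b‖ := norm_inner_le_norm a b
  have h3 : ‖⟪ψ, (A ∘L B - B ∘L A) ψ⟫_ℂ‖ ≤ 2 * (‖a‖ * ‖b‖) := by
    rw [him]; linarith
  have hn : (0:ℝ) ≤ ‖⟪ψ, (A ∘L B - B ∘L A) ψ⟫_ℂ‖ := norm_nonneg _
  nlinarith [norm_nonneg a, norm_nonneg b]
end

section
/- Let ℏ > 0 and m > 0 be real constants and let φ : ℝ → ℂ be continuous with compact support. Define ψ : ℝ × ℝ → ℂ by ψ(x,t) = (2πℏ)^(−1/2) ∫_ℝ φ(p) · exp(i(p·x − (p²/(2m))·t)/ℏ) dp. Then ψ satisfies the free-particle wave equation: for all x and t, i·ℏ·∂ψ/∂t (x,t) = −(ℏ²/(2m)) · ∂²ψ/∂x² (x,t). -/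
/-!
Differentiate under the integral sign: for a continuous amplitude of compact support the
integrand and its parameter derivatives are dominated by an integrable function, uniformly in
the parameter. So `∂ₜ` and `∂ₓ²` act on each plane wave `e^{i(px − Et)/ℏ}` separately,
multiplying it by `−iE/ℏ` and `−p²/ℏ²`, and `E = p²/(2m)` makes the two sides agree.
-/

open Real Complex MeasureTheory

noncomputable section

variable {α : Type*} [MeasurableSpace α] [TopologicalSpace α] [OpensMeasurableSpace α]

def waveSuperposition (μ : Measure α) (g : α → ℂ) (k : α → ℝ) (s : ℝ) : ℂ :=
  ∫ p, g p * cexp (s * k p * I) ∂μ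

variable {μ : Measure α} [IsFiniteMeasureOnCompacts μ] {g : α → ℂ} {k : α → ℝ}

theorem hasDerivAt_waveSuperposition (hg : Continuous g) (hgs : HasCompactSupport g)
    (hk : Continuous k) (s : ℝ) :
    HasDerivAt (waveSuperposition μ g k)
      (waveSuperposition μ (fun p => g p * (k p * I)) k s) s := by
  have hF : ∀ s : ℝ, Continuous fun p => g p * cexp (s * k p * I) := fun s => by fun_prop
  have hdiff : ∀ (p : α) (s : ℝ), HasDerivAt (fun s : ℝ => g p * cexp (s * k p * I))
      (g p * (k p * I) * cexp (s * k p * I)) s := fun p s => by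
    simpa [mul_assoc, mul_comm, mul_left_comm] using
      (((ofRealCLM.hasDerivAt (x := s)).mul_const (k p * I : ℂ)).cexp).const_mul (g p)
  refine (hasDerivAt_integral_of_dominated_loc_of_deriv_le (bound := fun p => ‖g p‖ * |k p|)
    Filter.univ_mem (.of_forall fun s => (hF s).aestronglyMeasurable)
    ((hF s).integrable_of_hasCompactSupport hgs.mul_right) ?_ (.of_forall fun p s _ => ?_)
    ((hg.norm.mul hk.abs).integrable_of_hasCompactSupport hgs.norm.mul_right)
    (.of_forall fun p s _ => hdiff p s)).2
  · exact (by fun_prop : Continuous fun p => g p * (k p * I) * cexp (s * k p * I))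
      |>.aestronglyMeasurable
  · rw [norm_mul, norm_mul, ← ofReal_mul, norm_exp_ofReal_mul_I, norm_mul, norm_I, norm_real,
      Real.norm_eq_abs, mul_one, mul_one]

theorem deriv_waveSuperposition (hg : Continuous g) (hgs : HasCompactSupport g)
    (hk : Continuous k) :
    deriv (waveSuperposition μ g k) = waveSuperposition μ (fun p => g p * (k p * I)) k :=
  funext fun s => (hasDerivAt_waveSuperposition hg hgs hk s).deriv

theorem deriv_deriv_waveSuperposition (hg : Continuous g) (hgs : HasCompactSupport g)
    (hk : Continuous k) :
    deriv (deriv (waveSuperposition μ g k)) =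
      waveSuperposition μ (fun p => g p * (k p * I) ^ 2) k := by
  rw [deriv_waveSuperposition hg hgs hk,
    deriv_waveSuperposition (g := fun p => g p * (k p * I)) (by fun_prop) hgs.mul_right hk]
  simp only [mul_assoc, sq]

end

theorem free_particle_wave_equation_general (ℏ m : ℝ)
    (φ : ℝ → ℂ) (hφc : Continuous φ) (hφs : HasCompactSupport φ)
    (ψ : ℝ → ℝ → ℂ)
    (hψ : ∀ x t : ℝ, ψ x t = ((2 * π * ℏ) ^ (-(1 : ℝ) / 2) : ℝ) *
      ∫ p : ℝ, φ p *
        Complex.exp (Complex.I * ((p : ℂ) * (x : ℂ) - ((p : ℂ) ^ 2 / (2 * (m : ℂ))) * (t : ℂ)) / (ℏ : ℂ))) :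
    ∀ x t : ℝ,
      Complex.I * (ℏ : ℂ) * deriv (fun τ : ℝ => ψ x τ) t =
        -((ℏ : ℂ) ^ 2 / (2 * (m : ℂ))) * deriv (fun y : ℝ => deriv (fun z : ℝ => ψ z t) y) x := by
  intro x t
  set c : ℂ := (((2 * π * ℏ) ^ (-(1 : ℝ) / 2) : ℝ) : ℂ)
  have hψt : (fun τ => ψ x τ) = fun τ => c * waveSuperposition volume
      (φ * fun p : ℝ => cexp (p * x / ℏ * I)) (fun p => -(p ^ 2 / (2 * m * ℏ))) τ := by
    ext τ
    simp only [hψ, waveSuperposition, Pi.mul_apply, mul_assoc, ← Complex.exp_add]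
    congr! 5 with p
    push_cast
    ring
  have hψx : (fun z => ψ z t) = fun z => c * waveSuperposition volume
      (φ * fun p : ℝ => cexp (-((p : ℂ) ^ 2 * t / (2 * m * ℏ)) * I)) (fun p => p / ℏ) z := by
    ext z
    simp only [hψ, waveSuperposition, Pi.mul_apply, mul_assoc, ← Complex.exp_add]
    congr! 5 with p
    push_cast
    ring
  rw [hψt, hψx, deriv_const_mul_field', deriv_const_mul_field', deriv_const_mul_field',
    deriv_waveSuperposition (hφc.mul (by fun_prop)) hφs.mul_right (by fun_prop),
    deriv_deriv_waveSuperposition (hφc.mul (by fun_prop)) hφs.mul_right (by fun_prop)]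
  simp only [waveSuperposition, ← integral_const_mul]
  refine integral_congr_ae (.of_forall fun p => ?_)
  simp only [Pi.mul_apply]
  push_cast
  field_simp

/-- Equations (29)-(32): the wave packet (27) solves the free Schrödinger equation (31). -/
theorem free_particle_wave_equation (ℏ m : ℝ) (hℏ : 0 < ℏ) (hm : 0 < m)
    (φ : ℝ → ℂ) (hφc : Continuous φ) (hφs : HasCompactSupport φ)
    (ψ : ℝ → ℝ → ℂ)
    (hψ : ∀ x t : ℝ, ψ x t = ((2 * π * ℏ) ^ (-(1 : ℝ) / 2) : ℝ) *
      ∫ p : ℝ, φ p *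
        Complex.exp (Complex.I * ((p : ℂ) * (x : ℂ) - ((p : ℂ) ^ 2 / (2 * (m : ℂ))) * (t : ℂ)) / (ℏ : ℂ))) :
    ∀ x t : ℝ,
      Complex.I * (ℏ : ℂ) * deriv (fun τ : ℝ => ψ x τ) t =
        -((ℏ : ℂ) ^ 2 / (2 * (m : ℂ))) * deriv (fun y : ℝ => deriv (fun z : ℝ => ψ z t) y) x :=
  free_particle_wave_equation_general ℏ m φ hφc hφs ψ hψ
end

section
/- Let n be a natural number and let Hₙ be the n-th physicists' Hermite polynomial, defined recursively by H₀(q) = 1 and H_{n+1}(q) = 2q·Hₙ(q) − Hₙ'(q). Then ∫_ℝ exp(−q²)·Hₙ(q)² dq = 2ⁿ·n!·√π. -/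
open Real

/-- The physicists' Hermite polynomials: H₀(q) = 1, H_{n+1}(q) = 2q·Hₙ(q) − Hₙ'(q). -/
noncomputable def physHermite : ℕ → ℝ → ℝ
  | 0 => fun _ => 1
  | n + 1 => fun q => 2 * q * physHermite n q - deriv (physHermite n) q

/-!
Write `w(q) = exp (-q²)`. Since `(p w)' = (p' - 2 q p) w` for every polynomial `p`, and `p w` is
integrable together with its derivative, `∫ (p' - 2 q p) w = 0`. Applied to `p = H_{n+1} Hₙ`, with
`H_{n+1} = 2 q Hₙ - Hₙ'` and the Appell property `H_{n+1}' = 2 (n + 1) Hₙ`, this gives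
`∫ H_{n+1}² w = 2 (n + 1) ∫ Hₙ² w`, and induction from `∫ w = √π` concludes.
-/

open Polynomial MeasureTheory

noncomputable def physHermitePoly : ℕ → ℝ[X]
  | 0 => 1
  | n + 1 => C 2 * X * physHermitePoly n - derivative (physHermitePoly n)

lemma physHermitePoly_succ (n : ℕ) :
    physHermitePoly (n + 1) = C 2 * X * physHermitePoly n - derivative (physHermitePoly n) :=
  rfl

lemma physHermite_eq_eval (n : ℕ) : physHermite n = fun q => (physHermitePoly n).eval q := by
  induction n with
  | zero => funext q; simp [physHermite, physHermitePoly]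
  | succ n ih =>
    funext q
    simp [physHermite, physHermitePoly_succ, ih, Polynomial.deriv]

lemma derivative_physHermitePoly_succ (n : ℕ) :
    derivative (physHermitePoly (n + 1)) = C (2 * (n + 1) : ℝ) * physHermitePoly n := by
  induction n with
  | zero => simp [physHermitePoly]
  | succ n ih =>
    rw [physHermitePoly_succ (n + 1), derivative_sub, derivative_mul, derivative_C_mul_X, ih,
      derivative_C_mul, physHermitePoly_succ n]
    simp only [map_mul, map_add, map_natCast, map_one]
    push_cast
    ring

lemma integrable_eval_mul_exp_neg_sq (p : ℝ[X]) :
    Integrable fun q : ℝ => p.eval q * exp (-q ^ 2) := by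
  induction p using Polynomial.induction_on' with
  | add p r hp hr => simpa [add_mul, Pi.add_def] using hp.add hr
  | monomial k a =>
    have h := integrable_rpow_mul_exp_neg_mul_sq (b := 1) one_pos
      (s := k) (neg_one_lt_zero.trans_le k.cast_nonneg)
    simp only [rpow_natCast, neg_mul, one_mul] at h
    simpa [mul_assoc] using h.const_mul a

lemma hasDerivAt_eval_mul_exp_neg_sq (p : ℝ[X]) (q : ℝ) :
    HasDerivAt (fun x => p.eval x * exp (-x ^ 2))
      ((derivative p - C 2 * X * p).eval q * exp (-q ^ 2)) q := by
  have hw : HasDerivAt (fun x : ℝ => exp (-x ^ 2)) (exp (-q ^ 2) * -(2 * q)) q := by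
    simpa using ((hasDerivAt_pow 2 q).neg).exp
  refine ((p.hasDerivAt q).mul hw).congr_deriv ?_
  simp only [eval_sub, eval_mul, eval_C, eval_X]
  ring

lemma integral_eval_derivative_sub_mul_exp_neg_sq (p : ℝ[X]) :
    ∫ q : ℝ, (derivative p - C 2 * X * p).eval q * exp (-q ^ 2) = 0 :=
  integral_eq_zero_of_hasDerivAt_of_integrable (hasDerivAt_eval_mul_exp_neg_sq p)
    (integrable_eval_mul_exp_neg_sq _) (integrable_eval_mul_exp_neg_sq p)

lemma integrable_exp_neg_sq_mul_eval_sq (p : ℝ[X]) :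
    Integrable fun q : ℝ => exp (-q ^ 2) * p.eval q ^ 2 := by
  have h := integrable_eval_mul_exp_neg_sq (p ^ 2)
  simp only [eval_pow] at h
  simpa only [mul_comm] using h

lemma integral_exp_neg_sq_mul_physHermitePoly_succ_sq (n : ℕ) :
    ∫ q : ℝ, exp (-q ^ 2) * (physHermitePoly (n + 1)).eval q ^ 2
      = 2 * (n + 1) * ∫ q : ℝ, exp (-q ^ 2) * (physHermitePoly n).eval q ^ 2 := by
  have h := integral_eval_derivative_sub_mul_exp_neg_sq (physHermitePoly (n + 1) * physHermitePoly n)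
  have hp : derivative (physHermitePoly (n + 1) * physHermitePoly n)
        - C 2 * X * (physHermitePoly (n + 1) * physHermitePoly n)
      = C (2 * (n + 1) : ℝ) * physHermitePoly n ^ 2 - physHermitePoly (n + 1) ^ 2 := by
    rw [derivative_mul, derivative_physHermitePoly_succ, physHermitePoly_succ n]
    ring
  have hintegrand : ∀ q : ℝ,
      (C (2 * (n + 1) : ℝ) * physHermitePoly n ^ 2 - physHermitePoly (n + 1) ^ 2).eval q
          * exp (-q ^ 2)
        = 2 * (n + 1) * (exp (-q ^ 2) * (physHermitePoly n).eval q ^ 2)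
          - exp (-q ^ 2) * (physHermitePoly (n + 1)).eval q ^ 2 := by
    intro q
    simp only [eval_sub, eval_mul, eval_pow, eval_C]
    ring
  simp only [hp, hintegrand] at h
  rw [integral_sub ((integrable_exp_neg_sq_mul_eval_sq _).const_mul _)
    (integrable_exp_neg_sq_mul_eval_sq _), integral_const_mul, sub_eq_zero] at h
  exact h.symm

/-- Equation (144): the normalization integral of the Hermite polynomials. -/
theorem hermite_normalization (n : ℕ) :
    ∫ q : ℝ, Real.exp (-q ^ 2) * physHermite n q ^ 2 = 2 ^ n * n.factorial * Real.sqrt π := by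
  rw [physHermite_eq_eval]
  induction n with
  | zero => simpa [physHermitePoly] using integral_gaussian 1
  | succ n ih =>
    rw [integral_exp_neg_sq_mul_physHermitePoly_succ_sq, ih]
    push_cast [Nat.factorial_succ]
    ring
end
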